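/- Let n ≥ 1 be a natural number and z ∈ ℂ with |z| < 1. Then ∫₀¹ z·(1 − (zt)^n)^{−(n+2)/n} dt = ∑_{k=0}^∞ ((1+2/n)_k (1/n)_k)/((1+1/n)_k · k!) · z^{nk+1}, where (1 − (zt)^n)^{−(n+2)/n} is the principal-branch complex power. In other words, the analytic part of the harmonic shear of the polygonal mapping φ(z) = ∫₀^z (1−ζ^n)^{−2/n} dζ with dilatation ω(z) = z^n is h(z) = z·F(1+2/n, 1/n; 1+1/n; z^n). -/

import Mathlib

/-!
Expand `(1 - w) ^ (-a)` in its binomial series `∑ (a)_k / k! w^k` and substitute `w = (zt)^n`.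
For `t ∈ [0, 1]` the terms are dominated by those of the absolutely convergent series at
`|z|^n < 1`, so the series may be integrated termwise; `∫₀¹ t^(nk) dt = 1/(nk+1)`, and
`1/(nk+1) = (1/n)_k / (1+1/n)_k` because the Pochhammer quotient telescopes.
-/

open Polynomial FormalMultilinearSeries

theorem Ring.choose_add_natCast_sub_one {K : Type*} [Field K] [CharZero K] (a : K) (k : ℕ) :
    Ring.choose (a + k - 1) k = (ascPochhammer K k).eval a / k.factorial := by
  rw [Ring.choose_eq_smul, descPochhammer_smeval_eq_ascPochhammer, ascPochhammer_smeval_eq_eval,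
    smul_eq_mul, div_eq_inv_mul]
  congr 3
  ring

theorem eval_ascPochhammer_mul_add {R : Type*} [CommSemiring R] (a : R) (k : ℕ) :
    (ascPochhammer R k).eval a * (a + k) = a * (ascPochhammer R k).eval (a + 1) := by
  rw [← ascPochhammer_succ_eval, ascPochhammer_succ_left, eval_mul, eval_X, eval_comp, eval_add,
    eval_X, eval_one]

theorem eval_ascPochhammer_one_add_one_div {K : Type*} [Field K] {n : K} (hn : n ≠ 0) (k : ℕ) :
    (ascPochhammer K k).eval (1 + 1 / n) = (ascPochhammer K k).eval (1 / n) * (n * k + 1) := by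
  have h := eval_ascPochhammer_mul_add (1 / n) k
  rw [add_comm (1 / n) 1] at h
  calc (ascPochhammer K k).eval (1 + 1 / n)
      = n * (1 / n * (ascPochhammer K k).eval (1 + 1 / n)) := by
        rw [← mul_assoc, mul_one_div_cancel hn, one_mul]
    _ = n * ((ascPochhammer K k).eval (1 / n) * (1 / n + k)) := by rw [h]
    _ = (ascPochhammer K k).eval (1 / n) * (n * k + 1) := by
        rw [mul_left_comm, mul_add, mul_one_div_cancel hn]
        ring

theorem eval_ascPochhammer_ne_zero_of_re_pos {a : ℂ} (ha : 0 < a.re) (k : ℕ) :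
    (ascPochhammer ℂ k).eval a ≠ 0 := by
  intro h
  obtain ⟨j, -, hj⟩ := (ascPochhammer_eval_eq_zero_iff k a).1 h
  have hre := congrArg Complex.re hj
  simp only [Complex.natCast_re, Complex.neg_re] at hre
  linarith [j.cast_nonneg (α := ℝ)]

namespace Complex

theorem hasFPowerSeriesOnBall_one_sub_cpow_neg (a : ℂ) :
    HasFPowerSeriesOnBall (fun x ↦ (1 - x) ^ (-a))
      (ofScalars ℂ fun k ↦ (ascPochhammer ℂ k).eval a / k.factorial) 0 1 := by
  simpa only [one_div, ← cpow_neg, Ring.choose_add_natCast_sub_one] using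
    one_div_one_sub_cpow_hasFPowerSeriesOnBall_zero a

theorem intervalIntegral_ofReal_pow (j : ℕ) : ∫ t in (0 : ℝ)..1, (t : ℂ) ^ j = 1 / (j + 1) := by
  simp_rw [← ofReal_pow]
  rw [intervalIntegral.integral_ofReal, integral_pow]
  push_cast
  simp

end Complex

theorem HasFPowerSeriesOnBall.hasSum_intervalIntegral_comp_mul_pow {f : ℂ → ℂ}
    {c : ℕ → ℂ} {r : ENNReal} (hf : HasFPowerSeriesOnBall f (ofScalars ℂ c) 0 r) {w : ℂ}
    (hw : ‖w‖₊ < r) (m : ℕ) :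
    HasSum (fun k ↦ c k * w ^ k / (m * k + 1)) (∫ t in (0 : ℝ)..1, f (w * (t : ℂ) ^ m)) := by
  have hle : ∀ t ∈ Set.uIoc (0 : ℝ) 1, ‖w * (t : ℂ) ^ m‖ ≤ ‖w‖ := fun t ht ↦ by
    rw [Set.uIoc_of_le zero_le_one] at ht
    rw [norm_mul, norm_pow, Complex.norm_real, Real.norm_of_nonneg ht.1.le]
    exact mul_le_of_le_one_right (norm_nonneg w) (pow_le_one₀ ht.1.le ht.2)
  have hterm (k : ℕ) :
      ∫ t in (0 : ℝ)..1, c k * (w * (t : ℂ) ^ m) ^ k = c k * w ^ k / (m * k + 1) := by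
    simp_rw [mul_pow, ← pow_mul, ← mul_assoc]
    rw [intervalIntegral.integral_const_mul, Complex.intervalIntegral_ofReal_pow]
    push_cast
    ring
  simp_rw [← hterm]
  refine intervalIntegral.hasSum_integral_of_dominated_convergence (fun k _ ↦ ‖c k‖ * ‖w‖ ^ k)
    (fun k ↦ by fun_prop) (fun k ↦ .of_forall fun t ht ↦ ?_) (.of_forall fun _ _ ↦ ?_)
    intervalIntegrable_const (.of_forall fun t ht ↦ ?_)
  · rw [norm_mul, norm_pow]
    gcongr
    exact hle t ht
  · simpa [ofScalars_norm] using
      (ofScalars ℂ c).summable_norm_mul_pow (r := ‖w‖₊) (hw.trans_le hf.r_le)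
  · have hmem : w * (t : ℂ) ^ m ∈ Metric.eball (0 : ℂ) r := by
      rw [Metric.mem_eball, edist_zero_right]
      exact lt_of_le_of_lt (by exact_mod_cast hle t ht) hw
    simpa only [ofScalars_apply_eq, smul_eq_mul, zero_add] using hf.hasSum hmem

/-- The analytic part of the harmonic shear of the regular `n`-gon mapping
`φ(z) = ∫₀^z (1-ζ^n)^(-2/n) dζ` with dilatation `ω(z) = z^n` is
`h(z) = z·F(1+2/n, 1/n; 1+1/n; z^n)`. -/
theorem polygon_shear_analytic_part
    (n : ℕ) (hn : 1 ≤ n) (z : ℂ) (hz : ‖z‖ < 1) :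
    (∫ t in (0:ℝ)..1,
        z * ((1 : ℂ) - (z * (t : ℂ)) ^ n) ^ (-(((n : ℂ) + 2) / (n : ℂ)))) =
      ∑' k : ℕ,
        (Polynomial.eval (1 + 2 / (n : ℂ)) (ascPochhammer ℂ k) *
            Polynomial.eval (1 / (n : ℂ)) (ascPochhammer ℂ k)) /
          (Polynomial.eval (1 + 1 / (n : ℂ)) (ascPochhammer ℂ k) *
            (Nat.factorial k : ℂ)) * z ^ (n * k + 1) := by
  have hn0 : (n : ℂ) ≠ 0 := Nat.cast_ne_zero.2 (by omega)
  have hzn : ‖z ^ n‖₊ < (1 : ENNReal) := by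
    rw [ENNReal.coe_lt_one_iff, ← NNReal.coe_lt_one, coe_nnnorm, norm_pow]
    exact pow_lt_one₀ (norm_nonneg z) hz (by omega)
  have hseries := ((Complex.hasFPowerSeriesOnBall_one_sub_cpow_neg (((n : ℂ) + 2) / n)
    ).hasSum_intervalIntegral_comp_mul_pow hzn n).mul_left z
  simp_rw [← mul_pow, ← intervalIntegral.integral_const_mul] at hseries
  refine hseries.tsum_eq.symm.trans (tsum_congr fun k ↦ ?_)
  have hQ : eval (1 / (n : ℂ)) (ascPochhammer ℂ k) ≠ 0 :=
    eval_ascPochhammer_ne_zero_of_re_pos (by simpa using Nat.succ_le_iff.1 hn) k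
  rw [eval_ascPochhammer_one_add_one_div hn0, show ((n : ℂ) + 2) / n = 1 + 2 / n by field_simp]
  field_simp
  ring
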